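/- arXiv:2203.12633 — 3 statements merged into one kernel-verified Lean document; each statement's English description precedes it below -/
import Mathlib

section
/- Consider the copositive program min_{W ∈ Δ^p} Tr(C W) subject to 𝒜W = v. Let β₀ > 0, and for t = 1, 2, … set β_t = β₀√(t+1) and η_t = 2/(t+1). Let W₁ ∈ Δ^p and y₁ ∈ ℝ^d, and for each t ≥ 1 define: G_t = C + 𝒜ᵀy_t + β_t 𝒜ᵀ(𝒜W_t − v); H_t ∈ Δ^p any minimizer of W ↦ Tr(G_t W) over Δ^p; W_{t+1} = (1 − η_t) W_t + η_t H_t; g_t = 𝒜W_{t+1} − v; and y_{t+1} = y_t + γ_t g_t where γ_t ≥ 0 satisfies γ_t‖g_t‖² ≤ β_t η_t² p² ‖𝒜‖². Assume there exists W⋆ ∈ Δ^p with 𝒜W⋆ = v minimizing Tr(C W) over {W ∈ Δ^p : 𝒜W = v}, that strong duality holds in the sense that there exists y⋆ ∈ ℝ^d with Tr(C W⋆) ≤ Tr(C W) + y⋆ᵀ(𝒜W − v) for all W ∈ Δ^p, and that there is D < ∞ with ‖y_t‖ ≤ D for all t and ‖y⋆‖ ≤ D. Then for every t ≥ 2, Tr(C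 W_t) − Tr(C W⋆) ≤ (1/√t)(6 β₀ p² ‖𝒜‖² + D²/(2β₀)). -/
open scoped BigOperators

noncomputable section

/-- A binary (0/1-valued) vector. -/
def binaryVec {ι : Type*} (x : ι → ℝ) : Prop := ∀ i, x i = 0 ∨ x i = 1

/-- `Δ^p`: the convex hull of the rank-one binary matrices `x xᵀ`, `x ∈ {0,1}^p`. -/
def CPdelta (ι : Type*) [Fintype ι] : Set (Matrix ι ι ℝ) :=
  convexHull ℝ {M | ∃ x : ι → ℝ, binaryVec x ∧ M = Matrix.vecMulVec x x}

/-- Frobenius inner product of matrices. -/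
def frobInner {ι : Type*} [Fintype ι] (A B : Matrix ι ι ℝ) : ℝ := ∑ i, ∑ j, A i j * B i j

/-- Frobenius norm of a matrix. -/
def frobNorm {ι : Type*} [Fintype ι] (A : Matrix ι ι ℝ) : ℝ :=
  Real.sqrt (∑ i, ∑ j, (A i j) ^ 2)

/-- Operator norm `‖𝒜‖ = sup {‖𝒜X‖ : ‖X‖_F ≤ 1}` of a linear map from matrices
(with the Frobenius norm) to `ℝ^d` (with the Euclidean norm). -/
def opNorm {p d : ℕ} (A : Matrix (Fin p) (Fin p) ℝ →ₗ[ℝ] EuclideanSpace ℝ (Fin d)) : ℝ :=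
  sSup {r : ℝ | ∃ X : Matrix (Fin p) (Fin p) ℝ, frobNorm X ≤ 1 ∧ r = ‖A X‖}

open scoped RealInnerProductSpace

/-! Track the augmented-Lagrangian gap
`E_t = Tr(C W_t) + ⟨y_t, 𝒜W_t - v⟩ + (β₀√t / 2) ‖𝒜W_t - v‖² - Tr(C W⋆)`.
Comparing the Frank–Wolfe vertex `H_t` with the feasible point `W⋆` in the linearised
subproblem, and noting that the dual step adds at most `β_t η_t² p² ‖𝒜‖²`, gives
`E_{t+1} ≤ (1 - η_t) E_t + (3/2) β_t η_t² p² ‖𝒜‖²`; the growth of the penalty parameter from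
`β₀√t` to `β_t` is absorbed because `β_t (1 - 2η_t) ≤ (1 - η_t) β₀√t`. Induction then yields
`E_t ≤ 6 β₀ p² ‖𝒜‖² / √t`, and completing the square in the dual term gives
`Tr(C W_t) - Tr(C W⋆) ≤ E_t + ‖y_t‖² / (2 β₀√t)`. -/

theorem mul_sqrt_le_mul_sqrt {a b x y : ℝ} (ha : 0 ≤ a) (hb : 0 ≤ b)
    (h : a ^ 2 * x ≤ b ^ 2 * y) : a * √x ≤ b * √y := by
  calc a * √x = √(a ^ 2 * x) := by rw [Real.sqrt_mul (sq_nonneg a), Real.sqrt_sq ha]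
    _ ≤ √(b ^ 2 * y) := Real.sqrt_le_sqrt h
    _ = b * √y := by rw [Real.sqrt_mul (sq_nonneg b), Real.sqrt_sq hb]

theorem sub_three_mul_sqrt_add_one_le {x : ℝ} (hx : 1 ≤ x) :
    (x - 3) * √(x + 1) ≤ (x - 1) * √x := by
  rcases le_or_gt x 3 with hx3 | hx3
  · exact (mul_nonpos_of_nonpos_of_nonneg (by linarith) (Real.sqrt_nonneg _)).trans
      (mul_nonneg (by linarith) (Real.sqrt_nonneg _))
  · exact mul_sqrt_le_mul_sqrt (by linarith) (by linarith) (by nlinarith)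

theorem sub_one_mul_sqrt_add_one_le {x : ℝ} (hx : 1 ≤ x) : (x - 1) * √(x + 1) ≤ x * √x :=
  mul_sqrt_le_mul_sqrt (by linarith) (by linarith) (by nlinarith)

theorem penalty_schedule_coeff_le {β₀ x : ℝ} (hβ₀ : 0 ≤ β₀) (hx : 1 ≤ x) :
    β₀ * √(x + 1) * (1 - 2 * (2 / (x + 1))) ≤ (1 - 2 / (x + 1)) * (β₀ * √x) := by
  have hx1 : 0 < x + 1 := by linarith
  have hL : β₀ * √(x + 1) * (1 - 2 * (2 / (x + 1))) = β₀ * ((x - 3) * √(x + 1)) / (x + 1) := by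
    field_simp; ring
  have hR : (1 - 2 / (x + 1)) * (β₀ * √x) = β₀ * ((x - 1) * √x) / (x + 1) := by
    field_simp; ring
  rw [hL, hR]
  exact div_le_div_of_nonneg_right
    (mul_le_mul_of_nonneg_left (sub_three_mul_sqrt_add_one_le hx) hβ₀) hx1.le

theorem rate_bound_step_le {x B : ℝ} (hx : 1 ≤ x) (hB : 0 ≤ B) :
    (1 - 2 / (x + 1)) * (6 * B / √x) + 3 / 2 * √(x + 1) * (2 / (x + 1)) ^ 2 * B ≤
      6 * B / √(x + 1) := by
  have hs : 0 < √x := Real.sqrt_pos.2 (by linarith)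
  have hr2 := Real.sq_sqrt (show 0 ≤ x + 1 by linarith)
  have hx1 : 0 < x + 1 := by linarith
  have hL : (1 - 2 / (x + 1)) * (6 * B / √x) + 3 / 2 * √(x + 1) * (2 / (x + 1)) ^ 2 * B =
      6 / ((x + 1) * √x * √(x + 1)) * (B * ((x - 1) * √(x + 1)) + B * √x) := by
    field_simp
    linear_combination 6 * B * √x * hr2
  have hR : 6 * B / √(x + 1) = 6 / ((x + 1) * √x * √(x + 1)) * (B * (x * √x) + B * √x) := by
    field_simp
  rw [hL, hR]
  exact mul_le_mul_of_nonneg_left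
    (add_le_add_left (mul_le_mul_of_nonneg_left (sub_one_mul_sqrt_add_one_le hx) hB) _)
    (by positivity)

theorem le_div_sqrt_of_rate_recursion {e : ℕ → ℝ} {B : ℝ} (hB : 0 ≤ B)
    (he : ∀ t : ℕ, 1 ≤ t → e (t + 1) ≤
      (1 - 2 / ((t : ℝ) + 1)) * e t + 3 / 2 * √((t : ℝ) + 1) * (2 / ((t : ℝ) + 1)) ^ 2 * B) :
    ∀ t : ℕ, 2 ≤ t → e t ≤ 6 * B / √(t : ℝ) := by
  intro t ht
  induction t, ht using Nat.le_induction with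
  | base =>
    have h := he 1 le_rfl
    have hsqrt : 6 * B / √2 = 3 * √2 * B := by
      field_simp
      linear_combination (-(3 * B)) * Real.sq_sqrt (show (0 : ℝ) ≤ 2 by norm_num)
    norm_num at h ⊢
    rw [hsqrt]
    linarith [mul_nonneg (Real.sqrt_nonneg 2) hB]
  | succ t ht ih =>
    have ht' : (1 : ℝ) ≤ t := by exact_mod_cast (by omega : 1 ≤ t)
    have hη : 0 ≤ 1 - 2 / ((t : ℝ) + 1) := by
      rw [sub_nonneg, div_le_one (by linarith)]
      linarith
    push_cast
    calc e (t + 1)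
        ≤ (1 - 2 / ((t : ℝ) + 1)) * e t + 3 / 2 * √((t : ℝ) + 1) * (2 / ((t : ℝ) + 1)) ^ 2 * B :=
          he t (by omega)
      _ ≤ (1 - 2 / ((t : ℝ) + 1)) * (6 * B / √t) +
            3 / 2 * √((t : ℝ) + 1) * (2 / ((t : ℝ) + 1)) ^ 2 * B := by gcongr
      _ ≤ 6 * B / √((t : ℝ) + 1) := rate_bound_step_le ht' hB

theorem Convex.frankWolfe_iterate_mem {E : Type*} [AddCommGroup E] [Module ℝ E] {s : Set E}
    (hs : Convex ℝ s) {W H : ℕ → E} {η : ℕ → ℝ} (hη : ∀ t, 1 ≤ t → η t ∈ Set.Icc (0 : ℝ) 1)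
    (hW1 : W 1 ∈ s) (hH : ∀ t, 1 ≤ t → H t ∈ s)
    (hW : ∀ t, 1 ≤ t → W (t + 1) = (1 - η t) • W t + η t • H t) :
    ∀ t, 1 ≤ t → W t ∈ s := by
  intro t ht
  induction t, ht using Nat.le_induction with
  | base => exact hW1
  | succ t ht ih =>
    rw [hW t ht]
    exact hs ih (hH t ht) (sub_nonneg.2 (hη t ht).2) (hη t ht).1 (sub_add_cancel 1 (η t))

section AugmentedLagrangian

variable {E F : Type*} [AddCommGroup E] [Module ℝ E] [NormedAddCommGroup F]
  [InnerProductSpace ℝ F] (f : E →ₗ[ℝ] ℝ) (A : E →ₗ[ℝ] F) (v : F)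

def augLagrangian (β : ℝ) (W : E) (y : F) : ℝ :=
  f W + ⟪y, A W - v⟫ + β / 2 * ‖A W - v‖ ^ 2

variable {f A v}

theorem le_augLagrangian_add_sq_norm_div {β : ℝ} (hβ : 0 < β) (W : E) (y : F) :
    f W ≤ augLagrangian f A v β W y + ‖y‖ ^ 2 / (2 * β) := by
  have hsq : 0 ≤ ‖y + β • (A W - v)‖ ^ 2 := sq_nonneg _
  rw [norm_add_sq_real, norm_smul, real_inner_smul_right, Real.norm_of_nonneg hβ.le] at hsq
  have hsplit : ⟪y, A W - v⟫ + β / 2 * ‖A W - v‖ ^ 2 + ‖y‖ ^ 2 / (2 * β) =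
      (‖y‖ ^ 2 + 2 * (β * ⟪y, A W - v⟫) + (β * ‖A W - v‖) ^ 2) / (2 * β) := by
    field_simp
    ring
  rw [augLagrangian]
  linarith [div_nonneg hsq (by positivity : (0 : ℝ) ≤ 2 * β)]

theorem augLagrangian_primal_step_le {β η M : ℝ} {W H Wstar : E} {y : F} (hη : 0 ≤ η)
    (hβ : 0 ≤ β) (hfeas : A Wstar = v)
    (horacle : f H + ⟪y, A H⟫ + β * ⟪A W - v, A H⟫ ≤
      f Wstar + ⟪y, A Wstar⟫ + β * ⟪A W - v, A Wstar⟫)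
    (hM : ‖A (H - W)‖ ^ 2 ≤ M) :
    augLagrangian f A v β ((1 - η) • W + η • H) y - f Wstar ≤
      (1 - η) * (f W - f Wstar + ⟪y, A W - v⟫) + β / 2 * (1 - 2 * η) * ‖A W - v‖ ^ 2 +
        β / 2 * η ^ 2 * M := by
  set g := A W - v
  set δ := A (H - W)
  have hg : A ((1 - η) • W + η • H) - v = g + η • δ := by
    simp only [g, δ, map_add, map_sub, map_smul]; module
  have hf : f ((1 - η) • W + η • H) = (1 - η) * f W + η * f H := by simp
  have hAH : A H = A W + δ := by simp [δ]
  have hv : v = A W - g := by simp [g]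
  rw [hAH, hfeas, hv] at horacle
  simp only [inner_add_right, inner_sub_right, real_inner_self_eq_norm_sq] at horacle
  have hlin := mul_le_mul_of_nonneg_left horacle hη
  have hquad := mul_le_mul_of_nonneg_left hM (by positivity : 0 ≤ β / 2 * η ^ 2)
  rw [augLagrangian, hg, hf, inner_add_right, real_inner_smul_right, norm_add_sq_real, norm_smul,
    real_inner_smul_right, Real.norm_of_nonneg hη]
  linarith

theorem augLagrangian_fwal_step_le {β β' η γ M : ℝ} {W H Wstar W' : E} {y y' : F} (hη : 0 ≤ η)
    (hβ : 0 ≤ β) (hcoef : β * (1 - 2 * η) ≤ (1 - η) * β') (hfeas : A Wstar = v)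
    (horacle : f H + ⟪y, A H⟫ + β * ⟪A W - v, A H⟫ ≤
      f Wstar + ⟪y, A Wstar⟫ + β * ⟪A W - v, A Wstar⟫)
    (hM : ‖A (H - W)‖ ^ 2 ≤ M) (hW' : W' = (1 - η) • W + η • H)
    (hy' : y' = y + γ • (A W' - v)) (hγ : γ * ‖A W' - v‖ ^ 2 ≤ β * η ^ 2 * M) :
    augLagrangian f A v β W' y' - f Wstar ≤
      (1 - η) * (augLagrangian f A v β' W y - f Wstar) + 3 / 2 * β * η ^ 2 * M := by
  have hprimal := augLagrangian_primal_step_le hη hβ hfeas horacle hM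
  have hpenalty := mul_le_mul_of_nonneg_right hcoef (sq_nonneg ‖A W - v‖)
  subst hW' hy'
  simp only [augLagrangian, inner_add_left, real_inner_smul_left, real_inner_self_eq_norm_sq]
    at hprimal ⊢
  linarith

end AugmentedLagrangian

section MatrixFacts

variable {ι : Type*} [Fintype ι]

theorem isSymm_of_mem_CPdelta {M : Matrix ι ι ℝ} (hM : M ∈ CPdelta ι) : M.IsSymm := by
  have hconv : Convex ℝ {X : Matrix ι ι ℝ | X.IsSymm} := by
    intro X hX Y hY a b _ _ _
    exact (Matrix.IsSymm.smul hX a).add (Matrix.IsSymm.smul hY b)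
  refine convexHull_min ?_ hconv hM
  rintro _ ⟨x, -, rfl⟩
  exact Matrix.transpose_vecMulVec x x

theorem mem_Icc_of_mem_CPdelta {M : Matrix ι ι ℝ} (hM : M ∈ CPdelta ι) (i j : ι) :
    M i j ∈ Set.Icc (0 : ℝ) 1 := by
  have hconv : Convex ℝ {X : Matrix ι ι ℝ | X i j ∈ Set.Icc (0 : ℝ) 1} :=
    (convex_Icc 0 1).linear_preimage (Matrix.entryLinearMap ℝ ℝ i j)
  refine convexHull_min ?_ hconv hM
  rintro _ ⟨x, hx, rfl⟩
  rcases hx i with hi | hi <;> rcases hx j with hj | hj <;> simp [Matrix.vecMulVec_apply, hi, hj]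

theorem trace_mul_eq_frobInner (M : Matrix ι ι ℝ) {X : Matrix ι ι ℝ} (hX : X.IsSymm) :
    Matrix.trace (M * X) = frobInner M X := by
  simp only [Matrix.trace, Matrix.diag_apply, Matrix.mul_apply, frobInner]
  exact Finset.sum_congr rfl fun i _ => Finset.sum_congr rfl fun j _ => by rw [hX.apply]

theorem trace_adjoint_mul {p d : ℕ} {A : Matrix (Fin p) (Fin p) ℝ →ₗ[ℝ] EuclideanSpace ℝ (Fin d)}
    {Aadj : EuclideanSpace ℝ (Fin d) →ₗ[ℝ] Matrix (Fin p) (Fin p) ℝ}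
    (hadj : ∀ X z, (∑ i, A X i * z i) = frobInner (Aadj z) X) (z : EuclideanSpace ℝ (Fin d))
    {X : Matrix (Fin p) (Fin p) ℝ} (hX : X.IsSymm) :
    Matrix.trace (Aadj z * X) = ⟪z, A X⟫ := by
  rw [trace_mul_eq_frobInner _ hX, ← hadj]
  simp [PiLp.inner_apply]

theorem trace_add_adjoint_mul {p d : ℕ}
    {A : Matrix (Fin p) (Fin p) ℝ →ₗ[ℝ] EuclideanSpace ℝ (Fin d)}
    {Aadj : EuclideanSpace ℝ (Fin d) →ₗ[ℝ] Matrix (Fin p) (Fin p) ℝ}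
    (hadj : ∀ X z, (∑ i, A X i * z i) = frobInner (Aadj z) X) (C : Matrix (Fin p) (Fin p) ℝ)
    (z g : EuclideanSpace ℝ (Fin d)) (β : ℝ) {X : Matrix (Fin p) (Fin p) ℝ} (hX : X.IsSymm) :
    Matrix.trace ((C + Aadj z + β • Aadj g) * X) =
      Matrix.trace (C * X) + ⟪z, A X⟫ + β * ⟪g, A X⟫ := by
  rw [Matrix.add_mul, Matrix.add_mul, Matrix.trace_add, Matrix.trace_add, Matrix.smul_mul,
    Matrix.trace_smul, trace_adjoint_mul hadj z hX, trace_adjoint_mul hadj g hX, smul_eq_mul]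

end MatrixFacts

section Frobenius

attribute [local instance] Matrix.frobeniusSeminormedAddCommGroup Matrix.frobeniusNormedSpace

variable {ι : Type*} [Fintype ι]

theorem frobNorm_eq_norm (X : Matrix ι ι ℝ) : frobNorm X = ‖X‖ := by
  rw [frobNorm, Matrix.frobenius_norm_def, Real.sqrt_eq_rpow]
  simp

theorem norm_le_card_of_abs_le_one {X : Matrix ι ι ℝ} (hX : ∀ i j, |X i j| ≤ 1) :
    ‖X‖ ≤ Fintype.card ι := by
  rw [← frobNorm_eq_norm, frobNorm, Real.sqrt_le_iff]
  refine ⟨Nat.cast_nonneg _, ?_⟩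
  calc ∑ i, ∑ j, X i j ^ 2 ≤ ∑ _i : ι, ∑ _j : ι, (1 : ℝ) := by
        gcongr with i _ j _
        exact (sq_le_one_iff_abs_le_one _).2 (hX i j)
    _ = (Fintype.card ι : ℝ) ^ 2 := by simp [sq]

theorem norm_sub_le_card_of_mem_CPdelta {X Y : Matrix ι ι ℝ} (hX : X ∈ CPdelta ι)
    (hY : Y ∈ CPdelta ι) : ‖X - Y‖ ≤ Fintype.card ι := by
  refine norm_le_card_of_abs_le_one fun i j => ?_
  have hXij := mem_Icc_of_mem_CPdelta hX i j
  have hYij := mem_Icc_of_mem_CPdelta hY i j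
  rw [Matrix.sub_apply, abs_le]
  constructor <;> linarith [hXij.1, hXij.2, hYij.1, hYij.2]

variable {p d : ℕ} (A : Matrix (Fin p) (Fin p) ℝ →ₗ[ℝ] EuclideanSpace ℝ (Fin d))

theorem exists_norm_apply_le_mul_norm :
    ∃ K, ∀ X : Matrix (Fin p) (Fin p) ℝ, ‖A X‖ ≤ K * ‖X‖ :=
  (SemilinearMapClass.bound_of_continuous A (LinearMap.continuous_of_finiteDimensional A)).imp
    fun _ hK => hK.2

theorem bddAbove_opNorm_set :
    BddAbove {r : ℝ | ∃ X : Matrix (Fin p) (Fin p) ℝ, frobNorm X ≤ 1 ∧ r = ‖A X‖} := by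
  obtain ⟨K, hK⟩ := exists_norm_apply_le_mul_norm A
  refine ⟨max K 0, ?_⟩
  rintro r ⟨X, hX, rfl⟩
  rw [frobNorm_eq_norm] at hX
  calc ‖A X‖ ≤ K * ‖X‖ := hK X
    _ ≤ max K 0 * ‖X‖ := by gcongr; exact le_max_left _ _
    _ ≤ max K 0 := mul_le_of_le_one_right (le_max_right _ _) hX

theorem norm_apply_le_opNorm_mul (X : Matrix (Fin p) (Fin p) ℝ) : ‖A X‖ ≤ opNorm A * ‖X‖ := by
  rcases (norm_nonneg X).eq_or_lt with hX | hX
  · obtain ⟨K, hK⟩ := exists_norm_apply_le_mul_norm A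
    simpa [← hX] using hK X
  · have hunit : ‖A (‖X‖⁻¹ • X)‖ ≤ opNorm A :=
      le_csSup (bddAbove_opNorm_set A) ⟨‖X‖⁻¹ • X, by
        rw [frobNorm_eq_norm, norm_smul, norm_inv, norm_norm, inv_mul_cancel₀ hX.ne'], rfl⟩
    rwa [map_smul, norm_smul, norm_inv, norm_norm, inv_mul_le_iff₀ hX, mul_comm] at hunit

theorem norm_apply_sub_sq_le_of_mem_CPdelta {X Y : Matrix (Fin p) (Fin p) ℝ}
    (hX : X ∈ CPdelta (Fin p)) (hY : Y ∈ CPdelta (Fin p)) :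
    ‖A (X - Y)‖ ^ 2 ≤ (p : ℝ) ^ 2 * opNorm A ^ 2 := by
  have hXY : ‖X - Y‖ ≤ p := by simpa using norm_sub_le_card_of_mem_CPdelta hX hY
  calc ‖A (X - Y)‖ ^ 2 ≤ (opNorm A * ‖X - Y‖) ^ 2 :=
        pow_le_pow_left₀ (norm_nonneg _) (norm_apply_le_opNorm_mul A _) 2
    _ = opNorm A ^ 2 * ‖X - Y‖ ^ 2 := mul_pow _ _ _
    _ ≤ opNorm A ^ 2 * (p : ℝ) ^ 2 := by gcongr
    _ = (p : ℝ) ^ 2 * opNorm A ^ 2 := mul_comm _ _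

end Frobenius

theorem fwal_objective_suboptimality_general
    {p d : ℕ}
    (C : Matrix (Fin p) (Fin p) ℝ)
    (A : Matrix (Fin p) (Fin p) ℝ →ₗ[ℝ] EuclideanSpace ℝ (Fin d))
    (Aadj : EuclideanSpace ℝ (Fin d) →ₗ[ℝ] Matrix (Fin p) (Fin p) ℝ)
    (hadj : ∀ (X : Matrix (Fin p) (Fin p) ℝ) (z : EuclideanSpace ℝ (Fin d)),
      (∑ i, A X i * z i) = frobInner (Aadj z) X)
    (v : EuclideanSpace ℝ (Fin d))
    (β₀ : ℝ) (hβ₀ : 0 < β₀)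
    (W : ℕ → Matrix (Fin p) (Fin p) ℝ)
    (y : ℕ → EuclideanSpace ℝ (Fin d))
    (H : ℕ → Matrix (Fin p) (Fin p) ℝ)
    (γ : ℕ → ℝ)
    (hW1 : W 1 ∈ CPdelta (Fin p))
    -- `H t` is a minimizer over `Δ^p` of `Z ↦ Tr (G_t Z)`, where
    -- `G_t = C + 𝒜ᵀ y_t + β_t 𝒜ᵀ (𝒜 W_t - v)` and `β_t = β₀ √(t+1)`
    (hHmem : ∀ t, 1 ≤ t → H t ∈ CPdelta (Fin p))
    (hHmin : ∀ t, 1 ≤ t → ∀ Z ∈ CPdelta (Fin p),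
      Matrix.trace
        ((C + Aadj (y t) + (β₀ * Real.sqrt ((t : ℝ) + 1)) • Aadj (A (W t) - v)) * H t) ≤
      Matrix.trace
        ((C + Aadj (y t) + (β₀ * Real.sqrt ((t : ℝ) + 1)) • Aadj (A (W t) - v)) * Z))
    -- primal update with step-size `η_t = 2/(t+1)`
    (hWupd : ∀ t, 1 ≤ t →
      W (t + 1) = (1 - 2 / ((t : ℝ) + 1)) • W t + (2 / ((t : ℝ) + 1)) • H t)
    -- dual step-size condition `γ_t ≥ 0`, `γ_t ‖g_t‖² ≤ β_t η_t² p² ‖𝒜‖²`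
    (hγ : ∀ t, 1 ≤ t →
      γ t * ‖A (W (t + 1)) - v‖ ^ 2 ≤
        (β₀ * Real.sqrt ((t : ℝ) + 1)) * (2 / ((t : ℝ) + 1)) ^ 2 * (p : ℝ) ^ 2 * opNorm A ^ 2)
    -- dual update `y_{t+1} = y_t + γ_t g_t` with `g_t = 𝒜 W_{t+1} - v`
    (hyupd : ∀ t, 1 ≤ t → y (t + 1) = y t + γ t • (A (W (t + 1)) - v))
    (Wstar : Matrix (Fin p) (Fin p) ℝ)
    (hWstar : Wstar ∈ CPdelta (Fin p)) (hfeas : A Wstar = v)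
    -- bounded effective dual domain
    (D : ℝ) (hyD : ∀ t, 1 ≤ t → ‖y t‖ ≤ D) :
    ∀ t, 2 ≤ t →
      Matrix.trace (C * W t) - Matrix.trace (C * Wstar) ≤
        (1 / Real.sqrt (t : ℝ)) *
          (6 * β₀ * (p : ℝ) ^ 2 * opNorm A ^ 2 + D ^ 2 / (2 * β₀)) := by
  let f : Matrix (Fin p) (Fin p) ℝ →ₗ[ℝ] ℝ :=
    Matrix.traceLinearMap (Fin p) ℝ ℝ ∘ₗ LinearMap.mulLeft ℝ C
  let e : ℕ → ℝ := fun t => augLagrangian f A v (β₀ * √(t : ℝ)) (W t) (y t) - f Wstar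
  have hWmem : ∀ t, 1 ≤ t → W t ∈ CPdelta (Fin p) :=
    (convex_convexHull ℝ _).frankWolfe_iterate_mem (η := fun t => 2 / ((t : ℝ) + 1))
      (fun t ht => ⟨by positivity, by rw [div_le_one (by positivity)]; norm_cast; omega⟩)
      hW1 hHmem hWupd
  have hstep : ∀ t : ℕ, 1 ≤ t → e (t + 1) ≤ (1 - 2 / ((t : ℝ) + 1)) * e t +
      3 / 2 * √((t : ℝ) + 1) * (2 / ((t : ℝ) + 1)) ^ 2 * (β₀ * ((p : ℝ) ^ 2 * opNorm A ^ 2)) := by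
    intro t ht
    have horacle := hHmin t ht Wstar hWstar
    rw [trace_add_adjoint_mul hadj _ _ _ _ (isSymm_of_mem_CPdelta (hHmem t ht)),
      trace_add_adjoint_mul hadj _ _ _ _ (isSymm_of_mem_CPdelta hWstar)] at horacle
    have h := augLagrangian_fwal_step_le (f := f) (by positivity) (by positivity)
      (penalty_schedule_coeff_le hβ₀.le (by exact_mod_cast ht)) hfeas horacle
      (norm_apply_sub_sq_le_of_mem_CPdelta A (hHmem t ht) (hWmem t ht)) (hWupd t ht) (hyupd t ht)
      ((hγ t ht).trans_eq (by ring))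
    simp only [e]
    push_cast
    linarith
  intro t ht
  have hβt : 0 < β₀ * √(t : ℝ) := mul_pos hβ₀ (Real.sqrt_pos.2 (by positivity))
  calc Matrix.trace (C * W t) - Matrix.trace (C * Wstar)
      ≤ e t + ‖y t‖ ^ 2 / (2 * (β₀ * √(t : ℝ))) := by
        show f (W t) - f Wstar ≤ augLagrangian f A v _ (W t) (y t) - f Wstar + _
        linarith [le_augLagrangian_add_sq_norm_div (f := f) (A := A) (v := v) hβt (W t) (y t)]
    _ ≤ 6 * (β₀ * ((p : ℝ) ^ 2 * opNorm A ^ 2)) / √(t : ℝ) + D ^ 2 / (2 * (β₀ * √(t : ℝ))) := by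
        gcongr
        · exact le_div_sqrt_of_rate_recursion (by positivity) hstep t ht
        · exact hyD t (by omega)
    _ = _ := by field_simp

/-- FWAL objective suboptimality, Proposition 1 of Q-FW.
Under the FWAL iteration with `β_t = β₀√(t+1)`, `η_t = 2/(t+1)`, assuming a feasible
minimizer `W⋆`, strong duality, and bounded dual iterates, the objective residual decays
as `O(1/√t)`. -/
theorem fwal_objective_suboptimality
    {p d : ℕ} (hp : 0 < p)
    (C : Matrix (Fin p) (Fin p) ℝ) (hC : C.IsSymm)
    (A : Matrix (Fin p) (Fin p) ℝ →ₗ[ℝ] EuclideanSpace ℝ (Fin d))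
    (Aadj : EuclideanSpace ℝ (Fin d) →ₗ[ℝ] Matrix (Fin p) (Fin p) ℝ)
    (hadj : ∀ (X : Matrix (Fin p) (Fin p) ℝ) (z : EuclideanSpace ℝ (Fin d)),
      (∑ i, A X i * z i) = frobInner (Aadj z) X)
    (v : EuclideanSpace ℝ (Fin d))
    (β₀ : ℝ) (hβ₀ : 0 < β₀)
    (W : ℕ → Matrix (Fin p) (Fin p) ℝ)
    (y : ℕ → EuclideanSpace ℝ (Fin d))
    (H : ℕ → Matrix (Fin p) (Fin p) ℝ)
    (γ : ℕ → ℝ)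
    (hW1 : W 1 ∈ CPdelta (Fin p))
    -- `H t` is a minimizer over `Δ^p` of `Z ↦ Tr (G_t Z)`, where
    -- `G_t = C + 𝒜ᵀ y_t + β_t 𝒜ᵀ (𝒜 W_t - v)` and `β_t = β₀ √(t+1)`
    (hHmem : ∀ t, 1 ≤ t → H t ∈ CPdelta (Fin p))
    (hHmin : ∀ t, 1 ≤ t → ∀ Z ∈ CPdelta (Fin p),
      Matrix.trace
        ((C + Aadj (y t) + (β₀ * Real.sqrt ((t : ℝ) + 1)) • Aadj (A (W t) - v)) * H t) ≤
      Matrix.trace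
        ((C + Aadj (y t) + (β₀ * Real.sqrt ((t : ℝ) + 1)) • Aadj (A (W t) - v)) * Z))
    -- primal update with step-size `η_t = 2/(t+1)`
    (hWupd : ∀ t, 1 ≤ t →
      W (t + 1) = (1 - 2 / ((t : ℝ) + 1)) • W t + (2 / ((t : ℝ) + 1)) • H t)
    -- dual step-size condition `γ_t ≥ 0`, `γ_t ‖g_t‖² ≤ β_t η_t² p² ‖𝒜‖²`
    (hγ0 : ∀ t, 1 ≤ t → 0 ≤ γ t)
    (hγ : ∀ t, 1 ≤ t →
      γ t * ‖A (W (t + 1)) - v‖ ^ 2 ≤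
        (β₀ * Real.sqrt ((t : ℝ) + 1)) * (2 / ((t : ℝ) + 1)) ^ 2 * (p : ℝ) ^ 2 * opNorm A ^ 2)
    -- dual update `y_{t+1} = y_t + γ_t g_t` with `g_t = 𝒜 W_{t+1} - v`
    (hyupd : ∀ t, 1 ≤ t → y (t + 1) = y t + γ t • (A (W (t + 1)) - v))
    (Wstar : Matrix (Fin p) (Fin p) ℝ)
    (hWstar : Wstar ∈ CPdelta (Fin p)) (hfeas : A Wstar = v)
    -- `W⋆` minimizes `Tr(C W)` over the feasible set
    (hmin : ∀ Z ∈ CPdelta (Fin p), A Z = v →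
      Matrix.trace (C * Wstar) ≤ Matrix.trace (C * Z))
    -- strong duality: a dual optimal `y⋆`
    (ystar : EuclideanSpace ℝ (Fin d))
    (hdual : ∀ Z ∈ CPdelta (Fin p),
      Matrix.trace (C * Wstar) ≤ Matrix.trace (C * Z) + ∑ i, ystar i * (A Z - v) i)
    -- bounded effective dual domain
    (D : ℝ) (hyD : ∀ t, 1 ≤ t → ‖y t‖ ≤ D) (hystarD : ‖ystar‖ ≤ D) :
    ∀ t, 2 ≤ t →
      Matrix.trace (C * W t) - Matrix.trace (C * Wstar) ≤
        (1 / Real.sqrt (t : ℝ)) *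
          (6 * β₀ * (p : ℝ) ^ 2 * opNorm A ^ 2 + D ^ 2 / (2 * β₀)) :=
  fwal_objective_suboptimality_general C A Aadj hadj v β₀ hβ₀ W y H γ hW1 hHmem hHmin hWupd hγ hyupd
    Wstar hWstar hfeas D hyD
end
end

section
/- (Weighted sum bound for the FW schedule.) Let β₀ > 0 and for integer i ≥ 1 set β_i = β₀√(i+1) and η_i = 2/(i+1). Then for every integer t ≥ 1, ∑_{i=1}^{t} β_i η_i² ∏_{j=i+1}^{t} (1 − η_j) ≤ 4β₀/√(t+1), where the empty product equals 1. -/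
/-!
Since `1 - 2/(j+1) = (j-1)/(j+1)`, the product telescopes to `i(i+1)/(t(t+1))`, so the
`i`-th term equals `4β₀ i / (√(i+1) t(t+1))`, which is at most `4β₀ / (t√(t+1))`.
Summing `t` such terms gives the bound.
-/

open Finset Real

lemma prod_Icc_one_sub_two_div_add_one {i t : ℕ} (hi : 1 ≤ i) (hit : i ≤ t) :
    ∏ j ∈ Icc (i + 1) t, (1 - 2 / ((j : ℝ) + 1)) = i * (i + 1) / (t * (t + 1)) := by
  induction t, hit using Nat.le_induction with
  | base =>
    have : (0 : ℝ) < i := by exact_mod_cast hi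
    rw [Icc_eq_empty (by omega), prod_empty, div_self (by positivity)]
  | succ n hin ih =>
    have : (0 : ℝ) < n := by exact_mod_cast hi.trans hin
    rw [prod_Icc_succ_top (by omega), ih]
    push_cast
    field_simp
    ring

lemma fw_schedule_term_le {β₀ : ℝ} (hβ₀ : 0 ≤ β₀) {i t : ℕ} (hi : 1 ≤ i) (hit : i ≤ t) :
    β₀ * √((i : ℝ) + 1) * (2 / ((i : ℝ) + 1)) ^ 2 *
        ∏ j ∈ Icc (i + 1) t, (1 - 2 / ((j : ℝ) + 1)) ≤
      4 * β₀ / (t * √((t : ℝ) + 1)) := by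
  have hi0 : (0 : ℝ) < i := by exact_mod_cast hi
  have ht0 : (0 : ℝ) < t := by exact_mod_cast hi.trans hit
  have hit' : (i : ℝ) ≤ t := by exact_mod_cast hit
  have hsqrt_i : √((i : ℝ) + 1) ^ 2 = i + 1 := sq_sqrt (by positivity)
  have hsqrt_t : √((t : ℝ) + 1) ^ 2 = t + 1 := sq_sqrt (by positivity)
  have hsqrt_le : √((i : ℝ) + 1) ≤ √((t : ℝ) + 1) := sqrt_le_sqrt (by linarith)
  rw [prod_Icc_one_sub_two_div_add_one hi hit]
  calc β₀ * √((i : ℝ) + 1) * (2 / ((i : ℝ) + 1)) ^ 2 * (i * (i + 1) / (t * (t + 1)))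
      = 4 * β₀ / (t * √((t : ℝ) + 1)) * (i / (√((i : ℝ) + 1) * √((t : ℝ) + 1))) := by
        field_simp
        rw [hsqrt_t, hsqrt_i]
        ring
    _ ≤ 4 * β₀ / (t * √((t : ℝ) + 1)) := by
        apply mul_le_of_le_one_right (by positivity)
        rw [div_le_one (by positivity)]
        nlinarith [mul_le_mul_of_nonneg_left hsqrt_le (sqrt_nonneg ((i : ℝ) + 1))]

theorem fw_schedule_weighted_sum_bound_general (β₀ : ℝ) (hβ₀ : 0 < β₀) (t : ℕ) :
    (∑ i ∈ Finset.Icc 1 t,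
        (β₀ * Real.sqrt ((i : ℝ) + 1)) * (2 / ((i : ℝ) + 1)) ^ 2 *
          ∏ j ∈ Finset.Icc (i + 1) t, (1 - 2 / ((j : ℝ) + 1))) ≤
      4 * β₀ / Real.sqrt ((t : ℝ) + 1) := by
  obtain rfl | ht := Nat.eq_zero_or_pos t
  · simp only [Icc_eq_empty_of_lt zero_lt_one, sum_empty]
    positivity
  calc _ ≤ ∑ _i ∈ Icc 1 t, 4 * β₀ / (t * √((t : ℝ) + 1)) :=
        sum_le_sum fun i hi ↦ fw_schedule_term_le hβ₀.le (mem_Icc.1 hi).1 (mem_Icc.1 hi).2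
    _ = 4 * β₀ / √((t : ℝ) + 1) := by
        rw [sum_const, Nat.card_Icc, Nat.add_sub_cancel, nsmul_eq_mul]
        field_simp

/-- Weighted sum bound for the Frank-Wolfe schedule.
For `β_i = β₀√(i+1)` and `η_i = 2/(i+1)`,
`∑_{i=1}^{t} β_i η_i² ∏_{j=i+1}^{t} (1 - η_j) ≤ 4β₀/√(t+1)`,
where the empty product equals `1`. -/
theorem fw_schedule_weighted_sum_bound (β₀ : ℝ) (hβ₀ : 0 < β₀) (t : ℕ) (ht : 1 ≤ t) :
    (∑ i ∈ Finset.Icc 1 t,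
        (β₀ * Real.sqrt ((i : ℝ) + 1)) * (2 / ((i : ℝ) + 1)) ^ 2 *
          ∏ j ∈ Finset.Icc (i + 1) t, (1 - 2 / ((j : ℝ) + 1))) ≤
      4 * β₀ / Real.sqrt ((t : ℝ) + 1) :=
  fw_schedule_weighted_sum_bound_general β₀ hβ₀ t
end

section
/- (Lifting of an affine inequality constraint.) Let x ∈ {0,1}^n, e ∈ ℝ^n, and f ∈ ℝ with eᵀx ≤ f, and set α := −∑_{j=1}^n min{e_j, 0}. Then −α² ≤ Tr((e eᵀ)(x xᵀ)) + 2α(eᵀx) ≤ f² + 2αf, where Tr((e eᵀ)(x xᵀ)) = (eᵀx)². -/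
open scoped BigOperators

/-- Lifting of an affine inequality constraint.
For binary `x` with `eᵀx ≤ f` and `α = −∑_j min{e_j, 0}`,
`−α² ≤ Tr((e eᵀ)(x xᵀ)) + 2α(eᵀx) ≤ f² + 2αf`, where `Tr((e eᵀ)(x xᵀ)) = (eᵀx)²`. -/
theorem inequality_constraint_lifting
    {n : ℕ} (x : Fin n → ℝ) (hx : binaryVec x) (e : Fin n → ℝ) (f : ℝ)
    (hef : (∑ j, e j * x j) ≤ f)
    (α : ℝ) (hα : α = -(∑ j, min (e j) 0)) :
    -α ^ 2 ≤
      Matrix.trace (Matrix.vecMulVec e e * Matrix.vecMulVec x x) +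
        2 * α * (∑ j, e j * x j) ∧
    Matrix.trace (Matrix.vecMulVec e e * Matrix.vecMulVec x x) +
        2 * α * (∑ j, e j * x j) ≤ f ^ 2 + 2 * α * f ∧
    Matrix.trace (Matrix.vecMulVec e e * Matrix.vecMulVec x x) =
      (∑ j, e j * x j) ^ 2 := by
  set s := ∑ j, e j * x j with hs
  have htr : Matrix.trace (Matrix.vecMulVec e e * Matrix.vecMulVec x x) = s ^ 2 := by
    simp only [Matrix.trace, Matrix.diag, Matrix.mul_apply, Matrix.vecMulVec_apply]
    rw [hs, sq, Finset.sum_mul_sum]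
    apply Finset.sum_congr rfl; intro i _
    apply Finset.sum_congr rfl; intro j _
    ring
  have hsα : -α ≤ s := by
    rw [hα, neg_neg, hs]
    apply Finset.sum_le_sum
    intro j _
    rcases hx j with h | h
    · simp [h]
    · simp [h]
  have h1 : -α ^ 2 ≤ s ^ 2 + 2 * α * s := by nlinarith [sq_nonneg (s + α)]
  have h2 : s ^ 2 + 2 * α * s ≤ f ^ 2 + 2 * α * f := by nlinarith [sq_nonneg (s + α)]
  exact ⟨htr ▸ h1, htr ▸ h2, htr⟩
end
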